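/- arXiv:1901.00130 — 2 statements merged into one kernel-verified Lean document; each statement's English description precedes it below -/
import Mathlib

section
/- Let N* ∈ ℕ and let {A_k}_{k=1}^{(N*)^d} and {ξ_k} be the sub-cubes and centers of the standard partition of 𝕀^d, with g and g_k as in the bump-function construction. Then for every sign vector ε = (ε_1, …, ε_{(N*)^d}) ∈ {−1,1}^{(N*)^d}, the function f(x) := Σ_{k=1}^{(N*)^d} ε_k g_k(x) belongs to Lip^{(r,c_0)}. -/
/-!
Every `s`-th partial derivative of `f` is `∑ₖ εₖ N^{-v} G(N(x - ξₖ))` with `G = ∂^s g`, and each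
summand is `c₀2^{v-1}`-Hölder. Since `G` is continuous and vanishes outside the closed box of
`g`, it vanishes on its boundary, so the summands are supported in pairwise disjoint open
sub-cubes. If `x` and `y` lie in different sub-cubes, the segment `[x, y]` passes through the
midpoint between the two centres in a coordinate where they differ, a point `z` outside both
supports, whence
`|∂^s f(x) - ∂^s f(y)| ≤ C (‖x - z‖^v + ‖z - y‖^v) ≤ 2^{1-v} C ‖x - y‖^v = c₀ ‖x - y‖^v`
by concavity of `t ↦ t^v`.
-/

open MeasureTheory

noncomputable section

/-- The cube `𝕀^d = [-1,1]^d` in Euclidean space. -/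
def cube (d : ℕ) : Set (EuclideanSpace ℝ (Fin d)) := { x | ∀ i, |x i| ≤ 1 }

/-- Partial derivative of `f` in the `i`-th coordinate direction. -/
def pderiv' {d : ℕ} (i : Fin d) (f : EuclideanSpace ℝ (Fin d) → ℝ) :
    EuclideanSpace ℝ (Fin d) → ℝ :=
  fun x => fderiv ℝ f x (EuclideanSpace.single i 1)

/-- Iterated partial derivative of `f` along the list of coordinate directions `l`
(a list of length `s` corresponds to a multi-index `α` with `|α| = s`). -/
def iterPD {d : ℕ} : List (Fin d) → (EuclideanSpace ℝ (Fin d) → ℝ) →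
    EuclideanSpace ℝ (Fin d) → ℝ
  | [], f => f
  | i :: l, f => iterPD l (pderiv' i f)

/-- The class `Lip^{(r,c₀)}` (with `r = s + v`, `0 < v ≤ 1`) of `(r,c₀)`-smooth
functions on `𝕀^d` : `f` is `s`-times differentiable and every `s`-th order
partial derivative is `v`-Hölder continuous on `𝕀^d` with constant `c₀`
(with respect to the Euclidean norm). -/
def LipClass (d s : ℕ) (v c0 : ℝ) : Set (EuclideanSpace ℝ (Fin d) → ℝ) :=
  { f | ContDiff ℝ s f ∧
      ∀ l : List (Fin d), l.length = s →
        ∀ x ∈ cube d, ∀ y ∈ cube d,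
          |iterPD l f x - iterPD l f y| ≤ c0 * ‖x - y‖ ^ v }

/-- The center `ξ_k` of the sub-cube `A_k` of the partition of `𝕀^d` into `N^d`
congruent sub-cubes of side length `2/N`; sub-cubes are indexed by `k : Fin d → Fin N`. -/
def ξ (d N : ℕ) (k : Fin d → Fin N) : EuclideanSpace ℝ (Fin d) :=
  WithLp.toLp 2 (fun i => -1 + (2 * ((k i : ℕ) : ℝ) + 1) / N)

/-- The localized bump `g_k(x) = N^{-r} g(N(x - ξ_k))`. -/
def bumpAt (d N : ℕ) (r : ℝ) (g : EuclideanSpace ℝ (Fin d) → ℝ)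
    (k : Fin d → Fin N) (x : EuclideanSpace ℝ (Fin d)) : ℝ :=
  ((N : ℝ) ^ (-r)) * g ((N : ℝ) • (x - ξ d N k))

open Set Filter Topology

section IteratedPartialDerivatives

variable {d : ℕ}

theorem ContDiff.pderiv' {n : ℕ} {f : EuclideanSpace ℝ (Fin d) → ℝ}
    (hf : ContDiff ℝ (n + 1 : ℕ) f) (i : Fin d) : ContDiff ℝ n (pderiv' i f) :=
  (hf.fderiv_right (by exact_mod_cast le_rfl)).clm_apply contDiff_const

theorem ContDiff.iterPD (l : List (Fin d)) {n : ℕ} {f : EuclideanSpace ℝ (Fin d) → ℝ}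
    (hf : ContDiff ℝ (l.length + n : ℕ) f) : ContDiff ℝ n (iterPD l f) := by
  induction l generalizing f with
  | nil => simpa [_root_.iterPD] using hf
  | cons i l ih =>
    exact ih (ContDiff.pderiv' (by simpa [Nat.add_right_comm] using hf) i)

theorem tsupport_iterPD_subset (l : List (Fin d)) (f : EuclideanSpace ℝ (Fin d) → ℝ) :
    tsupport (iterPD l f) ⊆ tsupport f := by
  induction l generalizing f with
  | nil => exact subset_rfl
  | cons i l ih => exact (ih _).trans (tsupport_fderiv_apply_subset ℝ _)

theorem pderiv'_fun_sum {ι : Type*} [Fintype ι] {f : ι → EuclideanSpace ℝ (Fin d) → ℝ}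
    (hf : ∀ k, Differentiable ℝ (f k)) (i : Fin d) :
    pderiv' i (fun x => ∑ k, f k x) = fun x => ∑ k, pderiv' i (f k) x := by
  ext x
  simp [pderiv', fderiv_fun_sum fun k _ => (hf k).differentiableAt]

theorem iterPD_fun_sum {ι : Type*} [Fintype ι] (l : List (Fin d))
    {f : ι → EuclideanSpace ℝ (Fin d) → ℝ} (hf : ∀ k, ContDiff ℝ l.length (f k)) :
    iterPD l (fun x => ∑ k, f k x) = fun x => ∑ k, iterPD l (f k) x := by
  induction l generalizing f with
  | nil => rfl
  | cons i l ih =>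
    rw [iterPD, pderiv'_fun_sum (fun k => (hf k).differentiable (by simp)) i]
    exact ih fun k => (hf k).pderiv' i

theorem pderiv'_const_mul_comp_smul_sub (c a : ℝ) (b : EuclideanSpace ℝ (Fin d))
    {f : EuclideanSpace ℝ (Fin d) → ℝ} (hf : Differentiable ℝ f) (i : Fin d) :
    pderiv' i (fun x => c * f (a • (x - b))) = fun x => c * a * pderiv' i f (a • (x - b)) := by
  ext x
  have hA : HasFDerivAt (fun x : EuclideanSpace ℝ (Fin d) => a • (x - b))
      (a • ContinuousLinearMap.id ℝ _) x :=
    ((hasFDerivAt_id x).sub_const b).const_smul a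
  have hcomp := ((hf _).hasFDerivAt.comp x hA).const_mul c
  simp only [Function.comp_apply] at hcomp
  simp [pderiv', hcomp.fderiv, mul_assoc]

theorem iterPD_const_mul_comp_smul_sub (l : List (Fin d)) (c a : ℝ)
    (b : EuclideanSpace ℝ (Fin d)) {f : EuclideanSpace ℝ (Fin d) → ℝ}
    (hf : ContDiff ℝ l.length f) :
    iterPD l (fun x => c * f (a • (x - b))) =
      fun x => c * a ^ l.length * iterPD l f (a • (x - b)) := by
  induction l generalizing c f with
  | nil => simp [iterPD]
  | cons i l ih =>
    have hf' : ContDiff ℝ (l.length + 1 : ℕ) f := by simpa using hf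
    rw [iterPD, pderiv'_const_mul_comp_smul_sub c a b (hf'.differentiable (by simp)) i,
      ih _ (hf'.pderiv' i)]
    ext x
    simp only [iterPD, List.length_cons, pow_succ]
    ring

end IteratedPartialDerivatives

theorem rpow_add_rpow_le_mul_rpow_add {a b v : ℝ} (ha : 0 ≤ a) (hb : 0 ≤ b) (hv0 : 0 ≤ v)
    (hv1 : v ≤ 1) : a ^ v + b ^ v ≤ 2 ^ (1 - v) * (a + b) ^ v := by
  have hmid := (Real.concaveOn_rpow hv0 hv1).2 (mem_Ici.2 ha) (mem_Ici.2 hb)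
    (by norm_num : (0 : ℝ) ≤ 1 / 2) (by norm_num : (0 : ℝ) ≤ 1 / 2) (by norm_num)
  have hsum : (1 / 2 : ℝ) • a + (1 / 2 : ℝ) • b = (a + b) / 2 := by
    simp only [smul_eq_mul]; ring
  have hsplit : (2 : ℝ) ^ (1 - v) * (a + b) ^ v = 2 * ((a + b) / 2) ^ v := by
    rw [Real.div_rpow (by positivity) zero_le_two, Real.rpow_sub two_pos, Real.rpow_one]
    ring
  rw [hsum, smul_eq_mul, smul_eq_mul] at hmid
  linarith

section HolderGluing

variable {E ι : Type*} [NormedAddCommGroup E] [NormedSpace ℝ E] {C v : ℝ}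

theorem abs_mul_sub_mul_le_of_mem_segment {φ ψ : E → ℝ} (hC : 0 ≤ C) (hv0 : 0 ≤ v)
    (hv1 : v ≤ 1) (hφ : ∀ x y, |φ x - φ y| ≤ C * ‖x - y‖ ^ v)
    (hψ : ∀ x y, |ψ x - ψ y| ≤ C * ‖x - y‖ ^ v) {x y z : E} (hz : z ∈ segment ℝ x y)
    (hφz : φ z = 0) (hψz : ψ z = 0) {a b : ℝ} (ha : |a| ≤ 1) (hb : |b| ≤ 1) :
    |a * φ x - b * ψ y| ≤ 2 ^ (1 - v) * C * ‖x - y‖ ^ v := by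
  have hxy : ‖x - z‖ + ‖z - y‖ = ‖x - y‖ := by
    simpa only [dist_eq_norm] using dist_add_dist_of_mem_segment hz
  calc |a * φ x - b * ψ y| ≤ |φ x - φ z| + |ψ z - ψ y| := by
        rw [hφz, hψz, sub_zero, zero_sub, abs_neg]
        refine (abs_sub _ _).trans (add_le_add ?_ ?_) <;> rw [abs_mul] <;>
          exact mul_le_of_le_one_left (abs_nonneg _) ‹_›
    _ ≤ C * (‖x - z‖ ^ v + ‖z - y‖ ^ v) := by
        rw [mul_add]; exact add_le_add (hφ x z) (hψ z y)
    _ ≤ C * (2 ^ (1 - v) * ‖x - y‖ ^ v) := by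
        rw [← hxy]
        exact mul_le_mul_of_nonneg_left
          (rpow_add_rpow_le_mul_rpow_add (norm_nonneg _) (norm_nonneg _) hv0 hv1) hC
    _ = 2 ^ (1 - v) * C * ‖x - y‖ ^ v := by ring

theorem abs_sum_mul_sub_sum_mul_le [Fintype ι] {φ : ι → E → ℝ} (hC : 0 ≤ C) (hv0 : 0 ≤ v)
    (hv1 : v ≤ 1) (hφ : ∀ k x y, |φ k x - φ k y| ≤ C * ‖x - y‖ ^ v)
    (hsep : ∀ k k', k ≠ k' → ∀ x y, φ k x ≠ 0 → φ k' y ≠ 0 →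
      ∃ z ∈ segment ℝ x y, φ k z = 0 ∧ φ k' z = 0)
    {e : ι → ℝ} (he : ∀ k, |e k| ≤ 1) (x y : E) :
    |∑ k, e k * φ k x - ∑ k, e k * φ k y| ≤ 2 ^ (1 - v) * C * ‖x - y‖ ^ v := by
  have hdisj : ∀ k k' x, k ≠ k' → φ k x ≠ 0 → φ k' x = 0 := fun k k' x hkk' hk => by
    by_contra hk'
    obtain ⟨z, hz, hkz, -⟩ := hsep k k' hkk' x x hk hk'
    rw [segment_same, mem_singleton_iff] at hz
    exact hk (hz ▸ hkz)
  have hsum_eq : ∀ k x, φ k x ≠ 0 → ∑ j, e j * φ j x = e k * φ k x := fun k x hk =>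
    Finset.sum_eq_single k (fun j _ hj => by rw [hdisj k j x (Ne.symm hj) hk, mul_zero])
      (by simp)
  by_cases hcross : ∃ k k', k ≠ k' ∧ φ k x ≠ 0 ∧ φ k' y ≠ 0
  · obtain ⟨k, k', hkk', hx, hy⟩ := hcross
    obtain ⟨z, hz, hkz, hk'z⟩ := hsep k k' hkk' x y hx hy
    rw [hsum_eq k x hx, hsum_eq k' y hy]
    exact abs_mul_sub_mul_le_of_mem_segment hC hv0 hv1 (hφ k) (hφ k') hz hkz hk'z (he k) (he k')
  push Not at hcross
  rw [← Finset.sum_sub_distrib]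
  by_cases hzero : ∑ k, (e k * φ k x - e k * φ k y) = 0
  · rw [hzero, abs_zero]; positivity
  obtain ⟨k, -, hk⟩ := Finset.exists_ne_zero_of_sum_ne_zero hzero
  have hothers : ∀ j, j ≠ k → φ j x = 0 ∧ φ j y = 0 := fun j hjk => by
    by_cases hkx : φ k x = 0
    · have hky : φ k y ≠ 0 := fun hky => hk (by rw [hkx, hky]; ring)
      exact ⟨by_contra fun hjx => hky (hcross j k hjk hjx), hdisj k j y (Ne.symm hjk) hky⟩
    · exact ⟨hdisj k j x (Ne.symm hjk) hkx, hcross k j (Ne.symm hjk) hkx⟩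
  rw [Finset.sum_eq_single k (fun j _ hjk => by simp [hothers j hjk]) (by simp), ← mul_sub,
    abs_mul]
  calc |e k| * |φ k x - φ k y| ≤ C * ‖x - y‖ ^ v :=
        mul_le_of_le_one_left (abs_nonneg _) (he k) |>.trans (hφ k x y)
    _ ≤ 2 ^ (1 - v) * C * ‖x - y‖ ^ v := by
        rw [mul_assoc]
        exact le_mul_of_one_le_left (by positivity)
          (Real.one_le_rpow one_le_two (by linarith))

end HolderGluing

theorem two_div_le_abs_ξ_sub {d N : ℕ} {k k' : Fin d → Fin N} {i : Fin d} (h : k i ≠ k' i) :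
    2 / N ≤ |ξ d N k i - ξ d N k' i| := by
  have hN : (0 : ℝ) < N := by exact_mod_cast (k i).pos
  have hki : (1 : ℝ) ≤ |((k i : ℕ) : ℝ) - (k' i : ℕ)| := by
    have hne : ((k i : ℕ) : ℤ) - (k' i : ℕ) ≠ 0 :=
      sub_ne_zero.2 (by exact_mod_cast Fin.val_ne_of_ne h)
    exact_mod_cast Int.one_le_abs hne
  have hdiff : ξ d N k i - ξ d N k' i = 2 / N * ((k i : ℕ) - (k' i : ℕ)) := by
    simp only [ξ, PiLp.toLp_apply]; ring
  rw [hdiff, abs_mul, abs_of_pos (by positivity)]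
  exact le_mul_of_one_le_right (by positivity) hki

theorem add_div_two_mem_uIcc {a b x y δ : ℝ} (hx : |x - a| < δ) (hy : |y - b| < δ)
    (hab : 2 * δ ≤ |a - b|) : (a + b) / 2 ∈ uIcc x y := by
  rw [abs_lt] at hx hy
  rcases le_total a b with h | h
  · rw [abs_of_nonpos (by linarith)] at hab
    exact mem_uIcc.2 (Or.inl ⟨by linarith, by linarith⟩)
  · rw [abs_of_nonneg (by linarith)] at hab
    exact mem_uIcc.2 (Or.inr ⟨by linarith, by linarith⟩)

theorem EuclideanSpace.exists_mem_segment_apply_eq {ι : Type*} [Fintype ι]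
    (x y : EuclideanSpace ℝ ι) (i : ι) {m : ℝ} (hm : m ∈ uIcc (x i) (y i)) :
    ∃ z ∈ segment ℝ x y, z i = m := by
  rw [← segment_eq_uIcc] at hm
  have hm' : m ∈ (PiLp.projₗ (𝕜 := ℝ) 2 (fun _ : ι => ℝ) i).toAffineMap '' segment ℝ x y := by
    rwa [image_segment]
  obtain ⟨z, hz, rfl⟩ := hm'
  exact ⟨z, hz, rfl⟩

theorem EuclideanSpace.abs_apply_lt_of_ne_zero {ι : Type*} [Fintype ι]
    {G : EuclideanSpace ℝ ι → ℝ} (hG : Continuous G) {ρ : ℝ} (hρ : 0 < ρ)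
    (hsupp : ∀ w, G w ≠ 0 → ∀ i, |w i| ≤ ρ) {w : EuclideanSpace ℝ ι} (hw : G w ≠ 0) (i : ι) :
    |w i| < ρ := by
  by_contra! hρw
  have hnear : ∀ᶠ t in 𝓝[>] (1 : ℝ), G (t • w) ≠ 0 ∧ 1 < t :=
    ((hG.comp (continuous_id.smul continuous_const)).continuousAt.eventually_ne
      (by simpa using hw)).filter_mono nhdsWithin_le_nhds |>.and self_mem_nhdsWithin
  obtain ⟨t, ht, h1t⟩ := hnear.exists
  have := hsupp _ ht i
  rw [PiLp.smul_apply, smul_eq_mul, abs_mul, abs_of_pos (by linarith)] at this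
  nlinarith

theorem exists_mem_segment_comp_smul_sub_ξ_eq_zero {d N : ℕ}
    {G : EuclideanSpace ℝ (Fin d) → ℝ} (hG : ∀ w, G w ≠ 0 → ∀ i, |w i| < 1)
    {k k' : Fin d → Fin N} (hkk' : k ≠ k') {x y : EuclideanSpace ℝ (Fin d)}
    (hx : G ((N : ℝ) • (x - ξ d N k)) ≠ 0) (hy : G ((N : ℝ) • (y - ξ d N k')) ≠ 0) :
    ∃ z ∈ segment ℝ x y,
      G ((N : ℝ) • (z - ξ d N k)) = 0 ∧ G ((N : ℝ) • (z - ξ d N k')) = 0 := by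
  obtain ⟨i, hi⟩ := Function.ne_iff.1 hkk'
  have hN : (0 : ℝ) < N := by exact_mod_cast (k i).pos
  have hnear : ∀ w j, G ((N : ℝ) • (w - ξ d N j)) ≠ 0 → |w i - ξ d N j i| < 1 / N :=
    fun w j hw => by
      have := hG _ hw i
      rw [PiLp.smul_apply, PiLp.sub_apply, smul_eq_mul, abs_mul, abs_of_pos hN] at this
      rw [lt_div_iff₀ hN]
      linarith
  have hsep := two_div_le_abs_ξ_sub hi
  have hmid : ∀ a b : ℝ, |(a + b) / 2 - a| = |a - b| / 2 ∧ |(a + b) / 2 - b| = |a - b| / 2 :=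
    fun a b => ⟨by rw [show (a + b) / 2 - a = -((a - b) / 2) by ring, abs_neg, abs_div, abs_two],
      by rw [show (a + b) / 2 - b = (a - b) / 2 by ring, abs_div, abs_two]⟩
  obtain ⟨z, hz, hzi⟩ := EuclideanSpace.exists_mem_segment_apply_eq x y i
    (add_div_two_mem_uIcc (hnear x k hx) (hnear y k' hy) (by rwa [mul_one_div]))
  have hfar : 1 / N ≤ |z i - ξ d N k i| ∧ 1 / N ≤ |z i - ξ d N k' i| := by
    rw [hzi, (hmid _ _).1, (hmid _ _).2, and_self, le_div_iff₀ two_pos]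
    linarith [show (2 : ℝ) / N = 1 / N * 2 by ring]
  exact ⟨z, hz, by_contra fun h => (hnear z k h).not_ge hfar.1,
    by_contra fun h => (hnear z k' h).not_ge hfar.2⟩

theorem abs_rpow_neg_mul_comp_smul_sub_le {E : Type*} [NormedAddCommGroup E] [NormedSpace ℝ E]
    {G : E → ℝ} {C v a : ℝ} (ha : 0 < a) (hG : ∀ x y, |G x - G y| ≤ C * ‖x - y‖ ^ v)
    (b x y : E) :
    |a ^ (-v) * G (a • (x - b)) - a ^ (-v) * G (a • (y - b))| ≤ C * ‖x - y‖ ^ v := by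
  have hnorm : ‖a • (x - b) - a • (y - b)‖ ^ v = a ^ v * ‖x - y‖ ^ v := by
    rw [← smul_sub, sub_sub_sub_cancel_right, norm_smul, Real.norm_of_nonneg ha.le,
      Real.mul_rpow ha.le (norm_nonneg _)]
  calc _ = a ^ (-v) * |G (a • (x - b)) - G (a • (y - b))| := by
        rw [← mul_sub, abs_mul, abs_of_pos (by positivity)]
    _ ≤ a ^ (-v) * (C * (a ^ v * ‖x - y‖ ^ v)) := by
        rw [← hnorm]; gcongr; exact hG _ _
    _ = C * ‖x - y‖ ^ v := by
        rw [Real.rpow_neg ha.le]; field_simp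

theorem abs_apply_lt_of_iterPD_ne_zero {d s : ℕ} {g : EuclideanSpace ℝ (Fin d) → ℝ}
    (hg : ContDiff ℝ s g) {ρ : ℝ} (hρ : 0 < ρ) (hsupp : ∀ x, g x ≠ 0 → ∀ i, |x i| ≤ ρ)
    {l : List (Fin d)} (hl : l.length = s) {w : EuclideanSpace ℝ (Fin d)}
    (hw : iterPD l g w ≠ 0) (i : Fin d) : |w i| < ρ := by
  have hbox : IsClosed {x : EuclideanSpace ℝ (Fin d) | ∀ i, |x i| ≤ ρ} := by
    simp only [ofPred_forall]
    exact isClosed_iInter fun i => isClosed_le (by fun_prop) continuous_const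
  refine EuclideanSpace.abs_apply_lt_of_ne_zero
    (ContDiff.iterPD l (n := 0) (by simpa [hl] using hg)).continuous hρ (fun u hu => ?_) hw i
  exact closure_minimal hsupp hbox (tsupport_iterPD_subset l g (subset_tsupport _ hu))

theorem iterPD_sum_mul_bumpAt {d s N : ℕ} {r v : ℝ} (hN : 0 < N) (hr : r = s + v)
    {g : EuclideanSpace ℝ (Fin d) → ℝ} (hg : ContDiff ℝ s g) (e : (Fin d → Fin N) → ℝ)
    {l : List (Fin d)} (hl : l.length = s) :
    iterPD l (fun x => ∑ k, e k * bumpAt d N r g k x) =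
      fun x => ∑ k, e k * ((N : ℝ) ^ (-v) * iterPD l g ((N : ℝ) • (x - ξ d N k))) := by
  have hg' : ContDiff ℝ l.length g := hl ▸ hg
  have hscale : (N : ℝ) ^ (-r) * (N : ℝ) ^ l.length = (N : ℝ) ^ (-v) := by
    rw [hl, ← Real.rpow_natCast, ← Real.rpow_add (by exact_mod_cast hN), hr]
    ring_nf
  simp only [bumpAt, ← mul_assoc]
  rw [iterPD_fun_sum l (f := fun k x => e k * (N : ℝ) ^ (-r) * g ((N : ℝ) • (x - ξ d N k)))
    fun k => contDiff_const.mul (hg'.comp (by fun_prop))]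
  ext x
  refine Finset.sum_congr rfl fun k _ => ?_
  rw [iterPD_const_mul_comp_smul_sub l _ _ _ hg', mul_assoc (e k), hscale]

theorem stmt9_general (d s N : ℕ) (hd : 1 ≤ d) (hN : 1 ≤ N) (v c0 r : ℝ) (hv : 0 < v)
    (hv1 : v ≤ 1) (hc0 : 0 < c0) (hr : r = s + v)
    (g : EuclideanSpace ℝ (Fin d) → ℝ)
    (hg_smooth : ContDiff ℝ s g)
    (hg_supp : ∀ x, g x ≠ 0 → ∀ i, |x i| ≤ 1 / Real.sqrt d)
    (hg_holder : ∀ l : List (Fin d), l.length = s →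
      ∀ x y : EuclideanSpace ℝ (Fin d),
        |iterPD l g x - iterPD l g y| ≤ c0 * (2 : ℝ) ^ (v - 1) * ‖x - y‖ ^ v)
    (e : (Fin d → Fin N) → ℝ) (he : ∀ k, e k = 1 ∨ e k = -1) :
    (fun x => ∑ k : Fin d → Fin N, e k * bumpAt d N r g k x) ∈ LipClass d s v c0 := by
  have hsqrt : 1 ≤ Real.sqrt d := Real.one_le_sqrt.2 (by exact_mod_cast hd)
  refine ⟨by unfold bumpAt; fun_prop, fun l hl x _ y _ => ?_⟩
  have hsupp : ∀ w, iterPD l g w ≠ 0 → ∀ i, |w i| < 1 := fun w hw i =>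
    (abs_apply_lt_of_iterPD_ne_zero hg_smooth (by positivity) hg_supp hl hw i).trans_le
      (div_le_one_of_le₀ hsqrt (by positivity))
  have hglue := abs_sum_mul_sub_sum_mul_le
    (φ := fun k x => (N : ℝ) ^ (-v) * iterPD l g ((N : ℝ) • (x - ξ d N k)))
    (e := e) (by positivity) hv.le hv1
    (fun k => abs_rpow_neg_mul_comp_smul_sub_le (by exact_mod_cast hN) (hg_holder l hl) _)
    (fun k k' hkk' x y hx hy => by
      obtain ⟨z, hz, hzk, hzk'⟩ := exists_mem_segment_comp_smul_sub_ξ_eq_zero hsupp hkk'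
        (right_ne_zero_of_mul hx) (right_ne_zero_of_mul hy)
      exact ⟨z, hz, mul_eq_zero_of_right _ hzk, mul_eq_zero_of_right _ hzk'⟩)
    (fun k => by rcases he k with h | h <;> simp [h]) x y
  have htwo : (2 : ℝ) ^ (1 - v) * 2 ^ (v - 1) = 1 := by
    rw [← Real.rpow_add two_pos]; simp
  rw [iterPD_sum_mul_bumpAt hN hr hg_smooth e hl]
  calc _ ≤ _ := hglue
    _ = c0 * ‖x - y‖ ^ v := by linear_combination (c0 * ‖x - y‖ ^ v) * htwo

/-- Lemma 5 of the paper: for every sign vector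
`ε ∈ {-1,1}^{N^d}`, the function `f = Σ_k ε_k g_k` built from the bump-function
construction belongs to `Lip^{(r,c₀)}`. Here `g` is `s`-times differentiable,
supported in `[-1/√d, 1/√d]^d`, equal to `1` on `[-1/(2√d), 1/(2√d)]^d`, and all of
its `s`-th order partial derivatives are `v`-Hölder with constant `c₀ 2^{v-1}`. -/
theorem stmt9 (d s N : ℕ) (hd : 1 ≤ d) (hN : 1 ≤ N) (v c0 r : ℝ) (hv : 0 < v)
    (hv1 : v ≤ 1) (hc0 : 0 < c0) (hr : r = s + v)
    (g : EuclideanSpace ℝ (Fin d) → ℝ)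
    (hg_smooth : ContDiff ℝ s g)
    (hg_supp : ∀ x, g x ≠ 0 → ∀ i, |x i| ≤ 1 / Real.sqrt d)
    (hg_one : ∀ x : EuclideanSpace ℝ (Fin d),
      (∀ i, |x i| ≤ 1 / (2 * Real.sqrt d)) → g x = 1)
    (hg_holder : ∀ l : List (Fin d), l.length = s →
      ∀ x y : EuclideanSpace ℝ (Fin d),
        |iterPD l g x - iterPD l g y| ≤ c0 * (2 : ℝ) ^ (v - 1) * ‖x - y‖ ^ v)
    (e : (Fin d → Fin N) → ℝ) (he : ∀ k, e k = 1 ∨ e k = -1) :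
    (fun x => ∑ k : Fin d → Fin N, e k * bumpAt d N r g k x) ∈ LipClass d s v c0 :=
  stmt9_general d s N hd hN v c0 r hv hv1 hc0 hr g hg_smooth hg_supp hg_holder e he

end
end

section
/- Let N* ∈ ℕ and let {A_k}, {ξ_k}, g and g_k be as in the bump-function construction. If ε, ε′ ∈ {−1,1}^{(N*)^d} satisfy Σ_{k=1}^{(N*)^d} |ε_k − ε′_k| ≥ (N*)^d / 2, then the functions f := Σ_k ε_k g_k and f_1 := Σ_k ε′_k g_k satisfy ‖f − f_1‖_{L^1(𝕀^d)} ≥ (1/2) · d^{−d/2} · (N*)^{−r}. -/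
/-!
Around each centre `ξ_k` take the sub-cube of half-side `1/(2N√d)`: the map
`x ↦ N(x - ξ_k)` sends it into the region where `g ≡ 1`, while every other `g_j` is
supported within sup-distance `1/N` of `ξ_j`, a centre `2/N` away from `ξ_k` in some
coordinate, hence vanishes there. So on this sub-cube
`|f - f₁| = |ε_k - ε'_k| N^{-r}`. These sub-cubes are disjoint, lie in `𝕀^d` and have volume
`(N√d)^{-d}`, so `‖f - f₁‖₁ ≥ (N√d)^{-d} N^{-r} Σ_k |ε_k - ε'_k| ≥ ½ d^{-d/2} N^{-r}`.
-/

open MeasureTheory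

noncomputable section

/-- The `L¹(𝕀^d)` distance between two functions on the cube. -/
def L1dist {d : ℕ} (f g : EuclideanSpace ℝ (Fin d) → ℝ) : ℝ :=
  ∫ x in cube d, |f x - g x|

open Metric

section SupNormCube

variable {ι : Type*} [Fintype ι]

lemma EuclideanSpace.setOf_abs_sub_le_eq_preimage_closedBall (c : EuclideanSpace ℝ ι) {h : ℝ}
    (hh : 0 ≤ h) :
    {x : EuclideanSpace ℝ ι | ∀ i, |x i - c i| ≤ h} =
      WithLp.ofLp ⁻¹' closedBall (WithLp.ofLp c) h := by
  ext x
  simp [dist_pi_le_iff hh, Real.dist_eq]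

lemma EuclideanSpace.measurableSet_setOf_abs_sub_le (c : EuclideanSpace ℝ ι) {h : ℝ}
    (hh : 0 ≤ h) : MeasurableSet {x : EuclideanSpace ℝ ι | ∀ i, |x i - c i| ≤ h} := by
  rw [setOf_abs_sub_le_eq_preimage_closedBall c hh]
  exact measurableSet_closedBall.preimage (PiLp.volume_preserving_ofLp ι).measurable

lemma EuclideanSpace.volume_real_setOf_abs_sub_le (c : EuclideanSpace ℝ ι) {h : ℝ}
    (hh : 0 ≤ h) :
    volume.real {x : EuclideanSpace ℝ ι | ∀ i, |x i - c i| ≤ h} = (2 * h) ^ Fintype.card ι := by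
  rw [measureReal_def, setOf_abs_sub_le_eq_preimage_closedBall c hh,
    (PiLp.volume_preserving_ofLp ι).measure_preimage measurableSet_closedBall.nullMeasurableSet,
    Real.volume_pi_closedBall _ hh, ENNReal.toReal_ofReal (by positivity)]

lemma EuclideanSpace.isCompact_setOf_abs_sub_le (c : EuclideanSpace ℝ ι) {h : ℝ} (hh : 0 ≤ h) :
    IsCompact {x : EuclideanSpace ℝ ι | ∀ i, |x i - c i| ≤ h} := by
  rw [setOf_abs_sub_le_eq_preimage_closedBall c hh]
  exact (PiLp.homeomorph 2 _).isCompact_preimage.2 (isCompact_closedBall _ _)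

end SupNormCube

lemma isCompact_cube (d : ℕ) : IsCompact (cube d) := by
  simpa [cube] using
    EuclideanSpace.isCompact_setOf_abs_sub_le (0 : EuclideanSpace ℝ (Fin d)) zero_le_one

lemma setIntegral_sum_le_setIntegral_of_pairwiseDisjoint {X ι : Type*} [MeasurableSpace X]
    {μ : Measure X} {f : X → ℝ} {S : Set X} {B : ι → Set X} (s : Finset ι)
    (hf : IntegrableOn f S μ) (hf0 : 0 ≤ f) (hB : ∀ k, MeasurableSet (B k))
    (hBS : ∀ k, B k ⊆ S) (hdisj : Pairwise (Function.onFun Disjoint B)) :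
    ∑ k ∈ s, ∫ x in B k, f x ∂μ ≤ ∫ x in S, f x ∂μ := by
  rw [← integral_biUnion_finset s (fun k _ => hB k) (fun j _ k _ hjk => hdisj hjk)
    (fun k _ => hf.mono_set (hBS k))]
  exact setIntegral_mono_set hf (.of_forall hf0)
    (Set.iUnion₂_subset fun k _ => hBS k).eventuallyLE

section Centers

variable {d N : ℕ}

lemma ξ_apply (k : Fin d → Fin N) (i : Fin d) :
    ξ d N k i = -1 + (2 * ((k i : ℕ) : ℝ) + 1) / N := rfl

lemma abs_ξ_le (k : Fin d → Fin N) (i : Fin d) : |ξ d N k i| ≤ 1 - 1 / N := by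
  have hN : (0 : ℝ) < N := by exact_mod_cast (k i).pos
  have hki : ((k i : ℕ) : ℝ) + 1 ≤ N := by exact_mod_cast (k i).isLt
  have hlow : 1 / (N : ℝ) ≤ (2 * (k i : ℕ) + 1) / N := by
    gcongr
    linarith [(Nat.cast_nonneg (k i : ℕ) : (0 : ℝ) ≤ _)]
  have hup : (2 * ((k i : ℕ) : ℝ) + 1) / N + 1 / N ≤ 2 := by
    rw [← add_div, div_le_iff₀ hN]
    linarith
  rw [ξ_apply, abs_le]
  constructor <;> linarith

lemma ξ_sub_ξ (j k : Fin d → Fin N) (i : Fin d) :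
    ξ d N j i - ξ d N k i = 2 * (((j i : ℕ) : ℝ) - (k i : ℕ)) / N := by
  rw [ξ_apply, ξ_apply]
  ring

lemma two_div_le_abs_ξ_sub_ξ {j k : Fin d → Fin N} {i : Fin d} (hi : j i ≠ k i) :
    2 / N ≤ |ξ d N j i - ξ d N k i| := by
  have hN : (0 : ℝ) < N := by exact_mod_cast (k i).pos
  have hjk : (1 : ℝ) ≤ |((j i : ℕ) : ℝ) - (k i : ℕ)| := by
    have hne : ((j i : ℕ) : ℤ) - (k i : ℕ) ≠ 0 :=
      sub_ne_zero.2 (by exact_mod_cast Fin.val_ne_of_ne hi)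
    exact_mod_cast Int.one_le_abs hne
  rw [ξ_sub_ξ, abs_div, abs_mul, abs_two, abs_of_pos hN]
  gcongr
  linarith

end Centers

def plateau (d N : ℕ) (k : Fin d → Fin N) : Set (EuclideanSpace ℝ (Fin d)) :=
  {x | ∀ i, |x i - ξ d N k i| ≤ 1 / (2 * N * √d)}

section Plateau

variable {d N : ℕ}

lemma plateau_radius_le (hN : 0 < N) (hd : 0 < d) : 1 / (2 * N * √d : ℝ) ≤ 1 / N / 2 := by
  have h1 : (1 : ℝ) ≤ √d := Real.one_le_sqrt.2 (by exact_mod_cast hd)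
  have h2 : (0 : ℝ) < 2 * N := by positivity
  rw [div_div, mul_comm (N : ℝ)]
  exact one_div_le_one_div_of_le h2 (le_mul_of_one_le_right h2.le h1)

lemma plateau_subset_cube (k : Fin d → Fin N) : plateau d N k ⊆ cube d := by
  intro x hx i
  have hN : 0 < N := (k i).pos
  have hρ : 1 / (2 * N * √d : ℝ) ≤ 1 / N :=
    (plateau_radius_le hN i.pos).trans (half_le_self (by positivity))
  calc |x i| = |(x i - ξ d N k i) + ξ d N k i| := by rw [sub_add_cancel]
    _ ≤ |x i - ξ d N k i| + |ξ d N k i| := abs_add_le _ _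
    _ ≤ 1 / N + (1 - 1 / N) := add_le_add ((hx i).trans hρ) (abs_ξ_le k i)
    _ = 1 := by ring

lemma disjoint_plateau {j k : Fin d → Fin N} (hjk : j ≠ k) :
    Disjoint (plateau d N j) (plateau d N k) := by
  obtain ⟨i, hi⟩ := Function.ne_iff.1 hjk
  have hN : (0 : ℝ) < N := by exact_mod_cast (k i).pos
  refine Set.disjoint_left.2 fun x hxj hxk => ?_
  have hfar := two_div_le_abs_ξ_sub_ξ hi
  have hnear : |ξ d N j i - ξ d N k i| ≤ |x i - ξ d N j i| + |x i - ξ d N k i| := by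
    simpa only [abs_sub_comm (x i)] using abs_sub_le (ξ d N j i) (x i) (ξ d N k i)
  have : (1 : ℝ) / N < 2 / N := by gcongr; norm_num
  linarith [hxj i, hxk i, plateau_radius_le (k i).pos i.pos]

lemma measurableSet_plateau (k : Fin d → Fin N) : MeasurableSet (plateau d N k) :=
  EuclideanSpace.measurableSet_setOf_abs_sub_le _ (by positivity)

lemma volume_real_plateau (k : Fin d → Fin N) :
    volume.real (plateau d N k) = ((N : ℝ) * √d)⁻¹ ^ d := by
  rw [plateau, EuclideanSpace.volume_real_setOf_abs_sub_le _ (by positivity), Fintype.card_fin]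
  congr 1
  field_simp

end Plateau

section Bump

variable {d N : ℕ} {r : ℝ} {g : EuclideanSpace ℝ (Fin d) → ℝ}

lemma bumpAt_of_mem_plateau
    (hg_one : ∀ x : EuclideanSpace ℝ (Fin d), (∀ i, |x i| ≤ 1 / (2 * √d)) → g x = 1)
    {k : Fin d → Fin N} {x : EuclideanSpace ℝ (Fin d)} (hx : x ∈ plateau d N k) :
    bumpAt d N r g k x = (N : ℝ) ^ (-r) := by
  rw [bumpAt, hg_one, mul_one]
  intro i
  have hN : (0 : ℝ) < N := by exact_mod_cast (k i).pos
  change |N * (x i - ξ d N k i)| ≤ _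
  rw [abs_mul, Nat.abs_cast, ← le_div_iff₀' hN, div_div, mul_right_comm]
  exact hx i

lemma bumpAt_eq_zero_of_mem_plateau
    (hg_supp : ∀ x, g x ≠ 0 → ∀ i, |x i| ≤ 1 / √d)
    {j k : Fin d → Fin N} {x : EuclideanSpace ℝ (Fin d)} (hjk : j ≠ k) (hx : x ∈ plateau d N k) :
    bumpAt d N r g j x = 0 := by
  obtain ⟨i, hi⟩ := Function.ne_iff.1 hjk
  have hN : (0 : ℝ) < N := by exact_mod_cast (k i).pos
  suffices g ((N : ℝ) • (x - ξ d N j)) = 0 by rw [bumpAt, this, mul_zero]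
  by_contra hg
  have hxj : |x i - ξ d N j i| ≤ 1 / N := by
    have hscaled : |N * (x i - ξ d N j i)| ≤ 1 / √d := hg_supp _ hg i
    rw [abs_mul, Nat.abs_cast, ← le_div_iff₀' hN] at hscaled
    refine hscaled.trans (div_le_div_of_nonneg_right ?_ hN.le)
    exact div_le_one_of_le₀ (Real.one_le_sqrt.2 (by exact_mod_cast i.pos)) (Real.sqrt_nonneg _)
  have hnear : |ξ d N j i - ξ d N k i| ≤ |x i - ξ d N j i| + |x i - ξ d N k i| := by
    simpa only [abs_sub_comm (x i)] using abs_sub_le (ξ d N j i) (x i) (ξ d N k i)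
  have : (2 : ℝ) / N = 2 * (1 / N) := by ring
  have : (0 : ℝ) < 1 / N := by positivity
  linarith [two_div_le_abs_ξ_sub_ξ hi, hx i, plateau_radius_le (k i).pos i.pos]

lemma sum_mul_bumpAt_of_mem_plateau
    (hg_one : ∀ x : EuclideanSpace ℝ (Fin d), (∀ i, |x i| ≤ 1 / (2 * √d)) → g x = 1)
    (hg_supp : ∀ x, g x ≠ 0 → ∀ i, |x i| ≤ 1 / √d) (a : (Fin d → Fin N) → ℝ)
    {k : Fin d → Fin N} {x : EuclideanSpace ℝ (Fin d)} (hx : x ∈ plateau d N k) :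
    ∑ j, a j * bumpAt d N r g j x = a k * (N : ℝ) ^ (-r) := by
  rw [Finset.sum_eq_single k, bumpAt_of_mem_plateau hg_one hx]
  · intro j _ hjk
    rw [bumpAt_eq_zero_of_mem_plateau hg_supp hjk hx, mul_zero]
  · simp

lemma setIntegral_plateau_abs_sum_mul_bumpAt
    (hg_one : ∀ x : EuclideanSpace ℝ (Fin d), (∀ i, |x i| ≤ 1 / (2 * √d)) → g x = 1)
    (hg_supp : ∀ x, g x ≠ 0 → ∀ i, |x i| ≤ 1 / √d) (a : (Fin d → Fin N) → ℝ)
    (k : Fin d → Fin N) :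
    ∫ x in plateau d N k, |∑ j, a j * bumpAt d N r g j x| =
      ((N : ℝ) * √d)⁻¹ ^ d * (|a k| * (N : ℝ) ^ (-r)) := by
  rw [setIntegral_congr_fun (measurableSet_plateau k)
      fun x hx => by rw [sum_mul_bumpAt_of_mem_plateau hg_one hg_supp a hx],
    setIntegral_const, volume_real_plateau, smul_eq_mul, abs_mul,
    abs_of_nonneg (Real.rpow_nonneg (Nat.cast_nonneg N) _)]

lemma continuous_bumpAt (hg : Continuous g) (k : Fin d → Fin N) :
    Continuous (bumpAt d N r g k) := by
  unfold bumpAt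
  fun_prop

end Bump

lemma rpow_neg_half_eq_inv_sqrt_pow (d : ℕ) : (d : ℝ) ^ (-(d : ℝ) / 2) = (√d ^ d)⁻¹ := by
  rw [Real.rpow_div_two_eq_sqrt _ (Nat.cast_nonneg d), Real.rpow_neg (Real.sqrt_nonneg _),
    Real.rpow_natCast]

theorem stmt10_general (d s N : ℕ) (hN : 1 ≤ N) (r : ℝ)
    (g : EuclideanSpace ℝ (Fin d) → ℝ)
    (hg_smooth : ContDiff ℝ s g)
    (hg_supp : ∀ x, g x ≠ 0 → ∀ i, |x i| ≤ 1 / Real.sqrt d)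
    (hg_one : ∀ x : EuclideanSpace ℝ (Fin d),
      (∀ i, |x i| ≤ 1 / (2 * Real.sqrt d)) → g x = 1)
    (e e' : (Fin d → Fin N) → ℝ)
    (hsep : ((N : ℝ) ^ d) / 2 ≤ ∑ k : Fin d → Fin N, |e k - e' k|) :
    (1 / 2) * (d : ℝ) ^ (-(d : ℝ) / 2) * (N : ℝ) ^ (-r) ≤
      L1dist (fun x => ∑ k : Fin d → Fin N, e k * bumpAt d N r g k x)
        (fun x => ∑ k : Fin d → Fin N, e' k * bumpAt d N r g k x) := by
  set F := fun x => |∑ k, (e k - e' k) * bumpAt d N r g k x|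
  have hN0 : (N : ℝ) ≠ 0 := Nat.cast_ne_zero.2 (Nat.one_le_iff_ne_zero.1 hN)
  have hF_cont : Continuous F := continuous_abs.comp <| continuous_finsetSum _ fun k _ =>
    continuous_const.mul (continuous_bumpAt hg_smooth.continuous k)
  have hF : IntegrableOn F (cube d) := hF_cont.continuousOn.integrableOn_compact (isCompact_cube d)
  calc (1 / 2) * (d : ℝ) ^ (-(d : ℝ) / 2) * (N : ℝ) ^ (-r)
      = (N : ℝ) ^ d / 2 * (((N : ℝ) * √d)⁻¹ ^ d * (N : ℝ) ^ (-r)) := by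
        have hNd : (N : ℝ) ^ d * ((N : ℝ) ^ d)⁻¹ = 1 := mul_inv_cancel₀ (pow_ne_zero d hN0)
        rw [rpow_neg_half_eq_inv_sqrt_pow, mul_inv, mul_pow, inv_pow]
        linear_combination (-(1 / 2) * (√d ^ d)⁻¹ * (N : ℝ) ^ (-r)) * hNd
    _ ≤ (∑ k, |e k - e' k|) * (((N : ℝ) * √d)⁻¹ ^ d * (N : ℝ) ^ (-r)) := by
        gcongr
    _ = ∑ k, ∫ x in plateau d N k, F x := by
        rw [Finset.sum_mul]
        refine Finset.sum_congr rfl fun k _ => ?_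
        rw [setIntegral_plateau_abs_sum_mul_bumpAt hg_one hg_supp]
        ring
    _ ≤ ∫ x in cube d, F x :=
        setIntegral_sum_le_setIntegral_of_pairwiseDisjoint _ hF (fun x => abs_nonneg _)
          measurableSet_plateau plateau_subset_cube fun _ _ => disjoint_plateau
    _ = _ := by
        simp only [F, L1dist, ← Finset.sum_sub_distrib, sub_mul]

/-- Lemma 6 of the paper: if two sign vectors `ε, ε'` satisfy
`Σ_k |ε_k - ε'_k| ≥ N^d/2`, then the corresponding functions `f = Σ_k ε_k g_k` and
`f₁ = Σ_k ε'_k g_k` of the bump-function construction satisfy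
`‖f - f₁‖_{L¹(𝕀^d)} ≥ (1/2) d^{-d/2} N^{-r}`. -/
theorem stmt10 (d s N : ℕ) (hd : 1 ≤ d) (hN : 1 ≤ N) (v c0 r : ℝ) (hv : 0 < v)
    (hv1 : v ≤ 1) (hc0 : 0 < c0) (hr : r = s + v)
    (g : EuclideanSpace ℝ (Fin d) → ℝ)
    (hg_smooth : ContDiff ℝ s g)
    (hg_supp : ∀ x, g x ≠ 0 → ∀ i, |x i| ≤ 1 / Real.sqrt d)
    (hg_one : ∀ x : EuclideanSpace ℝ (Fin d),
      (∀ i, |x i| ≤ 1 / (2 * Real.sqrt d)) → g x = 1)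
    (hg_holder : ∀ l : List (Fin d), l.length = s →
      ∀ x y : EuclideanSpace ℝ (Fin d),
        |iterPD l g x - iterPD l g y| ≤ c0 * (2 : ℝ) ^ (v - 1) * ‖x - y‖ ^ v)
    (e e' : (Fin d → Fin N) → ℝ)
    (he : ∀ k, e k = 1 ∨ e k = -1) (he' : ∀ k, e' k = 1 ∨ e' k = -1)
    (hsep : ((N : ℝ) ^ d) / 2 ≤ ∑ k : Fin d → Fin N, |e k - e' k|) :
    (1 / 2) * (d : ℝ) ^ (-(d : ℝ) / 2) * (N : ℝ) ^ (-r) ≤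
      L1dist (fun x => ∑ k : Fin d → Fin N, e k * bumpAt d N r g k x)
        (fun x => ∑ k : Fin d → Fin N, e' k * bumpAt d N r g k x) :=
  stmt10_general d s N hN r g hg_smooth hg_supp hg_one e e' hsep

end
end
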